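/- arXiv:1705.07984 — 2 statements merged into one kernel-verified Lean document; each statement's English description precedes it below -/
import Mathlib

section
/- The q-binomial theorem specialization: as formal power series, Σ_{m≥0} q1^m (q3; p)_m / (p; p)_m = (q1 q3; p)_∞ / (q1; p)_∞, where (z; p)_m = Π_{s=0}^{m-1} (1 - z p^s) and (z; p)_∞ = Π_{s=0}^∞ (1 - z p^s). -/
/-!
Put `S(x) = ∑ xᵐ (a;p)ₘ/(p;p)ₘ`. Its coefficients converge to `(a;p)_∞/(p;p)_∞`, hence are
bounded, so `S` converges for `‖x‖ < 1` and `S(x) → S(0) = 1` as `x → 0`. The recursion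
`(1 - pᵐ⁺¹) cₘ₊₁ = (1 - a pᵐ) cₘ` of the coefficients gives the functional equation
`(1 - x) S(x) = (1 - a x) S(p x)`; iterating it `n` times gives
`S(x) (x;p)ₙ = (x a;p)ₙ S(pⁿ x)`, and letting `n → ∞` gives `S(x) (x;p)_∞ = (x a;p)_∞`.
-/

open Filter Finset Topology

noncomputable section

variable {𝕜 : Type*} [NormedField 𝕜]

def qPochhammer (z p : 𝕜) (m : ℕ) : 𝕜 := ∏ s ∈ range m, (1 - z * p ^ s)

def qPochhammerInf (z p : 𝕜) : 𝕜 := ∏' s : ℕ, (1 - z * p ^ s)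

def qBinomialCoeff (a p : 𝕜) (m : ℕ) : 𝕜 := qPochhammer a p m / qPochhammer p p m

def qBinomialSeries (a p x : 𝕜) : 𝕜 := ∑' m : ℕ, x ^ m * qBinomialCoeff a p m

lemma norm_mul_pow_lt_one {z p : 𝕜} (hz : ‖z‖ < 1) (hp : ‖p‖ ≤ 1) (s : ℕ) :
    ‖z * p ^ s‖ < 1 := by
  rw [norm_mul, norm_pow]
  exact mul_lt_one_of_nonneg_of_lt_one_left (norm_nonneg z) hz (pow_le_one₀ (norm_nonneg p) hp)

lemma one_sub_mul_pow_ne_zero {z p : 𝕜} (hz : ‖z‖ < 1) (hp : ‖p‖ ≤ 1) (s : ℕ) :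
    1 - z * p ^ s ≠ 0 := by
  rw [sub_ne_zero]
  intro h
  simpa [← h] using norm_mul_pow_lt_one hz hp s

lemma qPochhammer_ne_zero {z p : 𝕜} (hz : ‖z‖ < 1) (hp : ‖p‖ ≤ 1) (m : ℕ) :
    qPochhammer z p m ≠ 0 :=
  prod_ne_zero_iff.2 fun s _ => one_sub_mul_pow_ne_zero hz hp s

lemma summable_norm_mul_pow (z : 𝕜) {p : 𝕜} (hp : ‖p‖ < 1) :
    Summable fun s : ℕ => ‖z * p ^ s‖ := by
  simpa [norm_mul, norm_pow] using
    (summable_geometric_of_lt_one (norm_nonneg p) hp).mul_left ‖z‖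

lemma qBinomialCoeff_zero (a p : 𝕜) : qBinomialCoeff a p 0 = 1 := by
  simp [qBinomialCoeff, qPochhammer]

lemma qBinomialCoeff_succ (a : 𝕜) {p : 𝕜} (hp : ‖p‖ < 1) (m : ℕ) :
    (1 - p ^ (m + 1)) * qBinomialCoeff a p (m + 1) = (1 - a * p ^ m) * qBinomialCoeff a p m := by
  have hden := qPochhammer_ne_zero hp hp.le m
  have hfac := one_sub_mul_pow_ne_zero hp hp.le m
  rw [← pow_succ'] at hfac
  simp only [qBinomialCoeff, qPochhammer, prod_range_succ, ← pow_succ']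
  field_simp

variable [CompleteSpace 𝕜]

section PowerSeries

variable {c : ℕ → 𝕜} {C : ℝ}

lemma summable_pow_mul_of_norm_le (hc : ∀ m, ‖c m‖ ≤ C) {x : 𝕜} (hx : ‖x‖ < 1) :
    Summable fun m : ℕ => x ^ m * c m := by
  refine ((summable_geometric_of_lt_one (norm_nonneg x) hx).mul_left C).of_norm_bounded fun m => ?_
  rw [norm_mul, norm_pow, mul_comm]
  exact mul_le_mul_of_nonneg_right (hc m) (by positivity)

lemma tendsto_tsum_pow_mul_nhds_zero (hc : ∀ m, ‖c m‖ ≤ C) :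
    Tendsto (fun x : 𝕜 => ∑' m : ℕ, x ^ m * c m) (𝓝 0) (𝓝 (c 0)) := by
  have hsum : ∑' m : ℕ, (0 : 𝕜) ^ m * c m = c 0 := by
    rw [tsum_eq_single 0 fun m hm => by simp [hm]]
    simp
  rw [← hsum]
  refine tendsto_tsum_of_dominated_convergence
    ((summable_geometric_of_lt_one (by norm_num) (by norm_num : (1 / 2 : ℝ) < 1)).mul_left C)
    (fun m => ((continuous_pow m).mul continuous_const).tendsto 0) ?_
  filter_upwards [Metric.ball_mem_nhds (0 : 𝕜) (by norm_num : (0 : ℝ) < 1 / 2)] with x hx m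
  rw [mem_ball_zero_iff] at hx
  rw [norm_mul, norm_pow, mul_comm]
  exact mul_le_mul (hc m) (pow_le_pow_left₀ (norm_nonneg x) hx.le m) (by positivity)
    ((norm_nonneg _).trans (hc m))

end PowerSeries

lemma multipliable_one_sub_mul_pow (z : 𝕜) {p : 𝕜} (hp : ‖p‖ < 1) :
    Multipliable fun s : ℕ => 1 - z * p ^ s := by
  simpa [sub_eq_add_neg] using
    multipliable_one_add_of_summable (f := fun s => -(z * p ^ s))
      (by simpa using summable_norm_mul_pow z hp)

lemma tendsto_qPochhammer (z : 𝕜) {p : 𝕜} (hp : ‖p‖ < 1) :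
    Tendsto (qPochhammer z p) atTop (𝓝 (qPochhammerInf z p)) :=
  (multipliable_one_sub_mul_pow z hp).hasProd.tendsto_prod_nat

lemma qPochhammerInf_ne_zero {z p : 𝕜} (hz : ‖z‖ < 1) (hp : ‖p‖ < 1) :
    qPochhammerInf z p ≠ 0 := by
  simpa [qPochhammerInf, sub_eq_add_neg] using
    tprod_one_add_ne_zero_of_summable (f := fun s => -(z * p ^ s))
      (by simpa [sub_eq_add_neg] using one_sub_mul_pow_ne_zero hz hp.le)
      (by simpa using summable_norm_mul_pow z hp)

lemma exists_norm_qBinomialCoeff_le (a : 𝕜) {p : 𝕜} (hp : ‖p‖ < 1) :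
    ∃ C, ∀ m, ‖qBinomialCoeff a p m‖ ≤ C := by
  have hlim := (tendsto_qPochhammer a hp).div (tendsto_qPochhammer p hp)
    (qPochhammerInf_ne_zero hp hp)
  obtain ⟨C, hC⟩ := isBounded_iff_forall_norm_le.1 (Metric.isBounded_range_of_tendsto _ hlim)
  exact ⟨C, fun m => hC _ ⟨m, rfl⟩⟩

lemma summable_qBinomialSeries (a : 𝕜) {p x : 𝕜} (hp : ‖p‖ < 1) (hx : ‖x‖ < 1) :
    Summable fun m : ℕ => x ^ m * qBinomialCoeff a p m :=
  have ⟨_, hC⟩ := exists_norm_qBinomialCoeff_le a hp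
  summable_pow_mul_of_norm_le hC hx

lemma tendsto_qBinomialSeries_nhds_zero (a : 𝕜) {p : 𝕜} (hp : ‖p‖ < 1) :
    Tendsto (qBinomialSeries a p) (𝓝 0) (𝓝 1) := by
  obtain ⟨_, hC⟩ := exists_norm_qBinomialCoeff_le a hp
  have hlim := tendsto_tsum_pow_mul_nhds_zero hC
  rwa [qBinomialCoeff_zero] at hlim

lemma qBinomialSeries_functional_eq (a : 𝕜) {p x : 𝕜} (hp : ‖p‖ < 1) (hx : ‖x‖ < 1) :
    (1 - x) * qBinomialSeries a p x = (1 - a * x) * qBinomialSeries a p (p * x) := by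
  have hpx : ‖p * x‖ < 1 := by rw [mul_comm]; simpa using norm_mul_pow_lt_one hx hp.le 1
  have hs := summable_qBinomialSeries a hp hx
  have hps := summable_qBinomialSeries a hp hpx
  have hshift : qBinomialSeries a p x - qBinomialSeries a p (p * x)
      = x * qBinomialSeries a p x - a * x * qBinomialSeries a p (p * x) := by
    rw [qBinomialSeries, qBinomialSeries, ← hs.tsum_sub hps, (hs.sub hps).tsum_eq_zero_add,
      ← tsum_mul_left, ← tsum_mul_left, ← (hs.mul_left x).tsum_sub (hps.mul_left (a * x))]
    simp only [pow_zero, sub_self, zero_add]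
    refine tsum_congr fun m => ?_
    linear_combination x ^ (m + 1) * qBinomialCoeff_succ a hp m
  linear_combination hshift

lemma qBinomialSeries_mul_qPochhammer (a : 𝕜) {p x : 𝕜} (hp : ‖p‖ < 1) (hx : ‖x‖ < 1) (n : ℕ) :
    qBinomialSeries a p x * qPochhammer x p n
      = qPochhammer (x * a) p n * qBinomialSeries a p (p ^ n * x) := by
  induction n with
  | zero => simp [qPochhammer]
  | succ n ih =>
    have hpnx : ‖p ^ n * x‖ < 1 := by rw [mul_comm]; exact norm_mul_pow_lt_one hx hp.le n
    have hfun := qBinomialSeries_functional_eq a hp hpnx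
    rw [← mul_assoc p, ← pow_succ'] at hfun
    simp only [qPochhammer, prod_range_succ] at ih ⊢
    linear_combination (1 - x * p ^ n) * ih + (∏ s ∈ range n, (1 - x * a * p ^ s)) * hfun

lemma qBinomialSeries_mul_qPochhammerInf (a : 𝕜) {p x : 𝕜} (hp : ‖p‖ < 1) (hx : ‖x‖ < 1) :
    qBinomialSeries a p x * qPochhammerInf x p = qPochhammerInf (x * a) p := by
  have hpnx : Tendsto (fun n => p ^ n * x) atTop (𝓝 0) := by
    simpa using (tendsto_pow_atTop_nhds_zero_of_norm_lt_one hp).mul_const x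
  have hlhs := (tendsto_qPochhammer x hp).const_mul (qBinomialSeries a p x)
  have hrhs := (tendsto_qPochhammer (x * a) hp).mul
    ((tendsto_qBinomialSeries_nhds_zero a hp).comp hpnx)
  rw [mul_one] at hrhs
  exact tendsto_nhds_unique (hlhs.congr fun n => qBinomialSeries_mul_qPochhammer a hp hx n) hrhs

theorem qBinomialSeries_eq (a : 𝕜) {p x : 𝕜} (hp : ‖p‖ < 1) (hx : ‖x‖ < 1) :
    qBinomialSeries a p x = qPochhammerInf (x * a) p / qPochhammerInf x p := by
  rw [eq_div_iff (qPochhammerInf_ne_zero hx hp), qBinomialSeries_mul_qPochhammerInf a hp hx]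

end

/-- q-binomial theorem: `Σ_m q1^m (q3;p)_m/(p;p)_m = (q1 q3; p)_∞ / (q1; p)_∞`. -/
theorem statement2 (p q1 q3 : ℂ) (hp : ‖p‖ < 1) (h1 : ‖q1‖ < 1) :
    ∑' m : ℕ,
      q1 ^ m * (∏ s ∈ Finset.range m, (1 - q3 * p ^ s)) /
        (∏ s ∈ Finset.range m, (1 - p * p ^ s)) =
    (∏' s : ℕ, (1 - q1 * q3 * p ^ s)) / (∏' s : ℕ, (1 - q1 * p ^ s)) := by
  simp_rw [mul_div_assoc]
  exact qBinomialSeries_eq q3 hp h1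
end

section
/- Wheel condition closure under shuffle product: let Sh_k be the space of symmetric rational functions G(x_1,…,x_k) = g(x_1,…,x_k)/Π_{i<j}(x_i − x_j)² with g a symmetric Laurent polynomial satisfying g = 0 whenever (x_1, x_2, x_3) = (x, q1 x, q1 q2 x) or (x, q2 x, q1 q2 x) (for k ≥ 3; no condition for k ≤ 2). Then for G1 ∈ Sh_k and G2 ∈ Sh_l, the shuffle product (G1 * G2)(x_1,…,x_{k+l}) = Sym[G1(x_1,…,x_k) G2(x_{k+1},…,x_{k+l}) Π_{i≤k < j} Π_{s=1}^3 (x_j − q_s x_i)/(x_j − x_i)] again lies in Sh_{k+l}; in particular it has the form (symmetric Laurent polynomial)/Π_{i<j}(x_i − x_j)² and satisfies the wheel condition. -/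
open MvPolynomial

/-- Value of the Laurent polynomial `P / (x_1 ⋯ x_n)^m` at a point. -/
noncomputable def lval {n : ℕ} (P : MvPolynomial (Fin n) ℂ) (m : ℕ) (x : Fin n → ℂ) : ℂ :=
  MvPolynomial.eval x P / (∏ i, x i) ^ m

/-- Vandermonde product `Π_{i<j} (x_i - x_j)`. -/
noncomputable def vand {n : ℕ} (x : Fin n → ℂ) : ℂ :=
  ∏ i : Fin n, ∏ j : Fin n, if i < j then (x i - x j) else 1

/-- Symmetry of a function of `n` variables. -/
def IsSymmFn {n : ℕ} (f : (Fin n → ℂ) → ℂ) : Prop :=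
  ∀ σ : Equiv.Perm (Fin n), ∀ x : Fin n → ℂ, f (x ∘ σ) = f x

/-- The wheel condition: the function vanishes whenever three (distinct positions of the)
variables are in ratio `(x, q1 x, q1 q2 x)` or `(x, q2 x, q1 q2 x)`. -/
def WheelFn {n : ℕ} (q1 q2 : ℂ) (f : (Fin n → ℂ) → ℂ) : Prop :=
  ∀ x : Fin n → ℂ, (∀ i, x i ≠ 0) →
    (∃ i j k : Fin n, i ≠ j ∧ j ≠ k ∧ i ≠ k ∧
      ((x j = q1 * x i ∧ x k = q1 * q2 * x i) ∨
       (x j = q2 * x i ∧ x k = q1 * q2 * x i))) →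
    f x = 0

/-!
Over the common denominator `(∏ xᵢ)^(m1 + m2) · Δ(x)²` every summand of the shuffle product
has a polynomial numerator: `Δ(x)² = Δ(a)² Δ(b)² ∏ (b_j - a_i)²` for the two blocks `a`, `b`
of variables, so one copy of the cross factor absorbs the simple poles of the kernel. As
`Δ(x)²` is symmetric, the average of these numerators over `S_{k+l}` is a symmetric polynomial.

For the wheel condition, `q1 q2 q3 = 1` makes a wheel `(x, q x, q1 q2 x)` a cycle
`i → j → k → i` along which each variable is some `q_s` times the previous one. Either the
cycle lies in one block, and the numerator of `G1` or `G2` vanishes there, or one of its steps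
goes from the first block to the second, and the kernel factor `x_j - q_s x_i` vanishes.
-/

open Finset
open scoped Nat

section Vandermonde

lemma vand_sq_eq_det_sq {n : ℕ} (x : Fin n → ℂ) :
    vand x ^ 2 = (Matrix.vandermonde x).det ^ 2 := by
  simp only [vand, Matrix.det_vandermonde, ← prod_pow, prod_ite, prod_const_one, mul_one,
    filter_lt_eq_Ioi]
  exact prod_congr rfl fun i _ => prod_congr rfl fun j _ => sub_sq_comm _ _

lemma vand_ne_zero {n : ℕ} {x : Fin n → ℂ} (hx : Function.Injective x) : vand x ≠ 0 := by
  rw [← pow_ne_zero_iff two_ne_zero, vand_sq_eq_det_sq]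
  exact pow_ne_zero _ (Matrix.det_vandermonde_ne_zero_iff.mpr hx)

lemma vand_sq_comp_perm {n : ℕ} (x : Fin n → ℂ) (σ : Equiv.Perm (Fin n)) :
    vand (x ∘ σ) ^ 2 = vand x ^ 2 := by
  have hperm : Matrix.vandermonde (x ∘ σ) = (Matrix.vandermonde x).submatrix σ id := rfl
  rw [vand_sq_eq_det_sq, vand_sq_eq_det_sq, hperm, Matrix.det_permute, mul_pow, ← Int.cast_pow,
    ← Units.val_pow_eq_pow_val, Int.units_sq, Units.val_one, Int.cast_one, one_mul]

lemma vand_append {k l : ℕ} (y : Fin (k + l) → ℂ) :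
    vand y = vand (fun i => y (Fin.castAdd l i)) * vand (fun j => y (Fin.natAdd k j)) *
      ∏ i : Fin k, ∏ j : Fin l, (y (Fin.castAdd l i) - y (Fin.natAdd k j)) := by
  have hcast (i j : Fin k) : Fin.castAdd l i < Fin.castAdd l j ↔ i < j := Iff.rfl
  have hcross (i : Fin k) (j : Fin l) : Fin.castAdd l i < Fin.natAdd k j := by
    simp only [Fin.lt_def, Fin.val_castAdd, Fin.val_natAdd]; omega
  simp only [vand, Fin.prod_univ_add, prod_mul_distrib, hcast, hcross, (hcross _ _).not_gt,
    Fin.natAdd_lt_natAdd_iff, ↓reduceIte, prod_const_one, mul_one]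
  ring

lemma vand_sq_append {k l : ℕ} (y : Fin (k + l) → ℂ) :
    vand y ^ 2 =
      vand (fun i => y (Fin.castAdd l i)) ^ 2 * vand (fun j => y (Fin.natAdd k j)) ^ 2 *
      (∏ i : Fin k, ∏ j : Fin l, (y (Fin.natAdd k j) - y (Fin.castAdd l i))) ^ 2 := by
  simp only [vand_append, mul_pow, ← prod_pow, sub_sq_comm (y (Fin.castAdd l _))]

end Vandermonde

section Symmetrize

variable {ι R : Type*} [Fintype ι] [DecidableEq ι] [Field R]

noncomputable def symmetrize (Q : MvPolynomial ι R) : MvPolynomial ι R :=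
  C ((Fintype.card ι)! : R)⁻¹ * ∑ σ : Equiv.Perm ι, rename σ Q

lemma eval_symmetrize (Q : MvPolynomial ι R) (x : ι → R) :
    eval x (symmetrize Q) =
      ((Fintype.card ι)! : R)⁻¹ * ∑ σ : Equiv.Perm ι, eval (x ∘ σ) Q := by
  simp [symmetrize, eval_rename]

lemma eval_comp_perm_symmetrize (Q : MvPolynomial ι R) (τ : Equiv.Perm ι) (x : ι → R) :
    eval (x ∘ τ) (symmetrize Q) = eval x (symmetrize Q) := by
  simp only [eval_symmetrize]
  congr 1
  exact Equiv.sum_comp (Equiv.mulLeft τ) fun σ => eval (x ∘ σ) Q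

end Symmetrize

lemma isSymmFn_lval {n : ℕ} {P : MvPolynomial (Fin n) ℂ} (m : ℕ)
    (hP : ∀ (τ : Equiv.Perm (Fin n)) x, eval (x ∘ τ) P = eval x P) :
    IsSymmFn (lval P m) := by
  intro τ x
  simp only [lval, hP, Function.comp_apply, Equiv.prod_comp]

section Wheel

variable {ι κ : Type*} (q1 q2 : ℂ)

def IsWheelTriple (x : ι → ℂ) (i j k : ι) : Prop :=
  i ≠ j ∧ j ≠ k ∧ i ≠ k ∧
    ((x j = q1 * x i ∧ x k = q1 * q2 * x i) ∨ (x j = q2 * x i ∧ x k = q1 * q2 * x i))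

variable {q1 q2}

lemma isWheelTriple_comp_iff {e : κ → ι} (he : Function.Injective e) (x : ι → ℂ) (i j k : κ) :
    IsWheelTriple q1 q2 (x ∘ e) i j k ↔ IsWheelTriple q1 q2 x (e i) (e j) (e k) := by
  simp only [IsWheelTriple, Function.comp_apply, he.ne_iff]

lemma wheelFn_lval_iff {n : ℕ} (P : MvPolynomial (Fin n) ℂ) (m : ℕ) :
    WheelFn q1 q2 (lval P m) ↔
      ∀ x : Fin n → ℂ, (∀ i, x i ≠ 0) → ∀ i j k, IsWheelTriple q1 q2 x i j k → eval x P = 0 := by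
  refine forall₂_congr fun x hx => ⟨fun h i j k hw => ?_, fun h ⟨i, j, k, hw⟩ => ?_⟩
  · have hprod : (∏ i, x i) ^ m ≠ 0 := pow_ne_zero _ (prod_ne_zero_iff.mpr fun i _ => hx i)
    exact (div_eq_zero_iff.mp (h ⟨i, j, k, hw⟩)).resolve_right hprod
  · rw [lval, h i j k hw, zero_div]

end Wheel

def shuffleFactor {R : Type*} [CommRing R] (q1 q2 q3 a b : R) : R :=
  (b - q1 * a) * (b - q2 * a) * (b - q3 * a)

lemma shuffleFactor_eq_zero_iff {K : Type*} [Field K] {q1 q2 q3 a b : K} :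
    shuffleFactor q1 q2 q3 a b = 0 ↔ b = q1 * a ∨ b = q2 * a ∨ b = q3 * a := by
  simp only [shuffleFactor, mul_eq_zero, sub_eq_zero, or_assoc]

lemma IsWheelTriple.shuffleFactor_eq_zero {ι : Type*} {q1 q2 q3 : ℂ} (hq : q1 * q2 * q3 = 1)
    {x : ι → ℂ} {i j k : ι} (h : IsWheelTriple q1 q2 x i j k) :
    shuffleFactor q1 q2 q3 (x i) (x j) = 0 ∧ shuffleFactor q1 q2 q3 (x j) (x k) = 0 ∧
      shuffleFactor q1 q2 q3 (x k) (x i) = 0 := by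
  simp only [shuffleFactor_eq_zero_iff]
  obtain ⟨-, -, -, ⟨hj, hk⟩ | ⟨hj, hk⟩⟩ := h <;> refine ⟨?_, ?_, ?_⟩
  · exact Or.inl hj
  · exact Or.inr (Or.inl (by rw [hk, hj]; ring))
  · exact Or.inr (Or.inr (by rw [hk]; linear_combination (-x i) * hq))
  · exact Or.inr (Or.inl hj)
  · exact Or.inl (by rw [hk, hj]; ring)
  · exact Or.inr (Or.inr (by rw [hk]; linear_combination (-x i) * hq))

lemma exists_cross_of_cycle {ι : Type*} (S : ι → Prop) (E : ι → ι → Prop) {i j k : ι}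
    (hij : E i j) (hjk : E j k) (hki : E k i) :
    (S i ∧ S j ∧ S k) ∨ (¬S i ∧ ¬S j ∧ ¬S k) ∨ ∃ p p', S p ∧ ¬S p' ∧ E p p' := by
  by_cases hi : S i <;> by_cases hj : S j <;> by_cases hk : S k
  all_goals tauto

section Shuffle

variable (q1 q2 q3 : ℂ) {k l : ℕ} (P1 : MvPolynomial (Fin k) ℂ) (m1 : ℕ)
  (P2 : MvPolynomial (Fin l) ℂ) (m2 : ℕ)

/-- Numerator of one shuffle summand over the common denominator
`(∏ xᵢ)^(m1 + m2) * vand x ^ 2`. -/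
noncomputable def shuffleNumerator : MvPolynomial (Fin (k + l)) ℂ :=
  rename (Fin.castAdd l) P1 * rename (Fin.natAdd k) P2 *
    (∏ j, X (Fin.natAdd k j)) ^ m1 * (∏ i, X (Fin.castAdd l i)) ^ m2 *
    ∏ i, ∏ j, shuffleFactor (C q1) (C q2) (C q3) (X (Fin.castAdd l i)) (X (Fin.natAdd k j)) *
      (X (Fin.natAdd k j) - X (Fin.castAdd l i))

lemma eval_shuffleNumerator (y : Fin (k + l) → ℂ) :
    eval y (shuffleNumerator q1 q2 q3 P1 m1 P2 m2) =
      eval (fun i => y (Fin.castAdd l i)) P1 * eval (fun j => y (Fin.natAdd k j)) P2 *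
        (∏ j, y (Fin.natAdd k j)) ^ m1 * (∏ i, y (Fin.castAdd l i)) ^ m2 *
        ∏ i, ∏ j, shuffleFactor q1 q2 q3 (y (Fin.castAdd l i)) (y (Fin.natAdd k j)) *
          (y (Fin.natAdd k j) - y (Fin.castAdd l i)) := by
  simp [shuffleNumerator, shuffleFactor, eval_rename, Function.comp_def]

lemma shuffle_summand_eq (y : Fin (k + l) → ℂ) (hy : ∀ p, y p ≠ 0)
    (hinj : Function.Injective y) :
    lval P1 m1 (fun i => y (Fin.castAdd l i)) / vand (fun i => y (Fin.castAdd l i)) ^ 2 *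
        (lval P2 m2 (fun j => y (Fin.natAdd k j)) / vand (fun j => y (Fin.natAdd k j)) ^ 2) *
        ∏ i, ∏ j, shuffleFactor q1 q2 q3 (y (Fin.castAdd l i)) (y (Fin.natAdd k j)) /
          (y (Fin.natAdd k j) - y (Fin.castAdd l i)) =
      eval y (shuffleNumerator q1 q2 q3 P1 m1 P2 m2) /
        ((∏ p, y p) ^ (m1 + m2) * vand y ^ 2) := by
  have hvA : vand (fun i => y (Fin.castAdd l i)) ≠ 0 :=
    vand_ne_zero (hinj.comp (Fin.castAdd_injective k l))
  have hvB : vand (fun j => y (Fin.natAdd k j)) ≠ 0 :=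
    vand_ne_zero (hinj.comp (Fin.natAdd_injective l k))
  have hpA : ∏ i, y (Fin.castAdd l i) ≠ 0 := prod_ne_zero_iff.mpr fun i _ => hy _
  have hpB : ∏ j, y (Fin.natAdd k j) ≠ 0 := prod_ne_zero_iff.mpr fun j _ => hy _
  have hE : ∏ i, ∏ j, (y (Fin.natAdd k j) - y (Fin.castAdd l i)) ≠ 0 :=
    prod_ne_zero_iff.mpr fun i _ => prod_ne_zero_iff.mpr fun j _ =>
      sub_ne_zero.mpr (hinj.ne fun h => by simp [Fin.ext_iff] at h; omega)
  rw [eval_shuffleNumerator, vand_sq_append, Fin.prod_univ_add]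
  simp only [prod_div_distrib, prod_mul_distrib, lval]
  field_simp
  ring

lemma eval_shuffleNumerator_eq_zero_of_shuffleFactor {y : Fin (k + l) → ℂ}
    (i : Fin k) (j : Fin l)
    (h : shuffleFactor q1 q2 q3 (y (Fin.castAdd l i)) (y (Fin.natAdd k j)) = 0) :
    eval y (shuffleNumerator q1 q2 q3 P1 m1 P2 m2) = 0 := by
  rw [eval_shuffleNumerator]
  exact mul_eq_zero_of_right _ <| prod_eq_zero (mem_univ i) <| prod_eq_zero (mem_univ j) <|
    by rw [h, zero_mul]

lemma exists_natAdd_eq_of_notMem_range_castAdd {p : Fin (k + l)}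
    (hp : p ∉ Set.range (Fin.castAdd l)) : ∃ j, Fin.natAdd k j = p := by
  induction p using Fin.addCases with
  | left i => exact absurd ⟨i, rfl⟩ hp
  | right j => exact ⟨j, rfl⟩

variable {q1 q2 q3 P1 m1 P2 m2}

lemma eval_shuffleNumerator_eq_zero_of_isWheelTriple (hq : q1 * q2 * q3 = 1)
    (hw1 : ∀ x : Fin k → ℂ, (∀ i, x i ≠ 0) → ∀ a b c, IsWheelTriple q1 q2 x a b c →
      eval x P1 = 0)
    (hw2 : ∀ x : Fin l → ℂ, (∀ i, x i ≠ 0) → ∀ a b c, IsWheelTriple q1 q2 x a b c →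
      eval x P2 = 0)
    {y : Fin (k + l) → ℂ} (hy : ∀ p, y p ≠ 0) {u v w : Fin (k + l)}
    (h : IsWheelTriple q1 q2 y u v w) :
    eval y (shuffleNumerator q1 q2 q3 P1 m1 P2 m2) = 0 := by
  obtain ⟨huv, hvw, hwu⟩ := h.shuffleFactor_eq_zero hq
  rcases exists_cross_of_cycle (· ∈ Set.range (Fin.castAdd l))
      (fun p p' => shuffleFactor q1 q2 q3 (y p) (y p') = 0) huv hvw hwu with
    ⟨⟨a, rfl⟩, ⟨b, rfl⟩, ⟨c, rfl⟩⟩ | ⟨hu, hv, hw⟩ | ⟨p, p', ⟨i, rfl⟩, hp', hpp'⟩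
  · have hP1 : eval (fun i => y (Fin.castAdd l i)) P1 = 0 := hw1 _ (fun _ => hy _) a b c
      ((isWheelTriple_comp_iff (Fin.castAdd_injective k l) y a b c).mpr h)
    simp [eval_shuffleNumerator, hP1]
  · obtain ⟨a, rfl⟩ := exists_natAdd_eq_of_notMem_range_castAdd hu
    obtain ⟨b, rfl⟩ := exists_natAdd_eq_of_notMem_range_castAdd hv
    obtain ⟨c, rfl⟩ := exists_natAdd_eq_of_notMem_range_castAdd hw
    have hP2 : eval (fun j => y (Fin.natAdd k j)) P2 = 0 := hw2 _ (fun _ => hy _) a b c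
      ((isWheelTriple_comp_iff (Fin.natAdd_injective l k) y a b c).mpr h)
    simp [eval_shuffleNumerator, hP2]
  · obtain ⟨j, rfl⟩ := exists_natAdd_eq_of_notMem_range_castAdd hp'
    exact eval_shuffleNumerator_eq_zero_of_shuffleFactor q1 q2 q3 P1 m1 P2 m2 i j hpp'

end Shuffle

theorem statement16_general (q1 q2 q3 : ℂ)
    (hq : q1 * q2 * q3 = 1)
    (k l : ℕ)
    (P1 : MvPolynomial (Fin k) ℂ) (m1 : ℕ)
    (P2 : MvPolynomial (Fin l) ℂ) (m2 : ℕ)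
    (hw1 : WheelFn q1 q2 (lval P1 m1)) (hw2 : WheelFn q1 q2 (lval P2 m2)) :
    ∃ (P : MvPolynomial (Fin (k + l)) ℂ) (m : ℕ),
      IsSymmFn (lval P m) ∧ WheelFn q1 q2 (lval P m) ∧
      ∀ x : Fin (k + l) → ℂ, (∀ i, x i ≠ 0) → Function.Injective x →
        (((k + l).factorial : ℂ))⁻¹ *
          ∑ σ : Equiv.Perm (Fin (k + l)),
            (lval P1 m1 (fun i => x (σ (Fin.castAdd l i))) /
                vand (fun i => x (σ (Fin.castAdd l i))) ^ 2) *
            (lval P2 m2 (fun j => x (σ (Fin.natAdd k j))) /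
                vand (fun j => x (σ (Fin.natAdd k j))) ^ 2) *
            ∏ i : Fin k, ∏ j : Fin l,
              ((x (σ (Fin.natAdd k j)) - q1 * x (σ (Fin.castAdd l i))) *
               (x (σ (Fin.natAdd k j)) - q2 * x (σ (Fin.castAdd l i))) *
               (x (σ (Fin.natAdd k j)) - q3 * x (σ (Fin.castAdd l i)))) /
              (x (σ (Fin.natAdd k j)) - x (σ (Fin.castAdd l i)))
        = lval P m x / vand x ^ 2 := by
  set Q := shuffleNumerator q1 q2 q3 P1 m1 P2 m2
  rw [wheelFn_lval_iff] at hw1 hw2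
  refine ⟨symmetrize Q, m1 + m2, isSymmFn_lval _ (eval_comp_perm_symmetrize Q), ?_, ?_⟩
  · rw [wheelFn_lval_iff]
    intro x hx u v w h
    rw [eval_symmetrize, sum_eq_zero fun σ _ => ?_, mul_zero]
    refine eval_shuffleNumerator_eq_zero_of_isWheelTriple hq hw1 hw2 (fun _ => hx _)
      ((isWheelTriple_comp_iff σ.injective x (σ.symm u) (σ.symm v) (σ.symm w)).mpr ?_)
    simpa using h
  · intro x hx hinj
    calc _ = ((k + l)! : ℂ)⁻¹ * ∑ σ : Equiv.Perm (Fin (k + l)),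
          eval (x ∘ σ) Q / ((∏ p, x p) ^ (m1 + m2) * vand x ^ 2) := by
          refine congrArg _ (sum_congr rfl fun σ _ => ?_)
          rw [← vand_sq_comp_perm x σ, ← Equiv.prod_comp σ x]
          exact shuffle_summand_eq q1 q2 q3 P1 m1 P2 m2 (x ∘ σ) (fun _ => hx _)
            (hinj.comp σ.injective)
      _ = _ := by
          rw [lval, eval_symmetrize, Fintype.card_fin, ← sum_div, div_div, mul_div_assoc]

/-- Wheel condition closure under the shuffle product: if `G1 = g1/Δ² ∈ Sh_k` and
`G2 = g2/Δ² ∈ Sh_l` (with `g1, g2` symmetric Laurent polynomials satisfying the wheel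
condition), then the symmetrized shuffle product `G1 * G2` is again of the form
(symmetric Laurent polynomial satisfying the wheel condition) `/ Π_{i<j}(x_i-x_j)²`. -/
theorem statement16 (q1 q2 q3 : ℂ) (h1 : q1 ≠ 0) (h2 : q2 ≠ 0) (h3 : q3 ≠ 0)
    (hq : q1 * q2 * q3 = 1)
    (hgen : ∀ a b : ℤ, q1 ^ a * q2 ^ b = 1 → a = 0 ∧ b = 0)
    (k l : ℕ)
    (P1 : MvPolynomial (Fin k) ℂ) (m1 : ℕ)
    (P2 : MvPolynomial (Fin l) ℂ) (m2 : ℕ)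
    (hs1 : IsSymmFn (lval P1 m1)) (hs2 : IsSymmFn (lval P2 m2))
    (hw1 : WheelFn q1 q2 (lval P1 m1)) (hw2 : WheelFn q1 q2 (lval P2 m2)) :
    ∃ (P : MvPolynomial (Fin (k + l)) ℂ) (m : ℕ),
      IsSymmFn (lval P m) ∧ WheelFn q1 q2 (lval P m) ∧
      ∀ x : Fin (k + l) → ℂ, (∀ i, x i ≠ 0) → Function.Injective x →
        (((k + l).factorial : ℂ))⁻¹ *
          ∑ σ : Equiv.Perm (Fin (k + l)),
            (lval P1 m1 (fun i => x (σ (Fin.castAdd l i))) /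
                vand (fun i => x (σ (Fin.castAdd l i))) ^ 2) *
            (lval P2 m2 (fun j => x (σ (Fin.natAdd k j))) /
                vand (fun j => x (σ (Fin.natAdd k j))) ^ 2) *
            ∏ i : Fin k, ∏ j : Fin l,
              ((x (σ (Fin.natAdd k j)) - q1 * x (σ (Fin.castAdd l i))) *
               (x (σ (Fin.natAdd k j)) - q2 * x (σ (Fin.castAdd l i))) *
               (x (σ (Fin.natAdd k j)) - q3 * x (σ (Fin.castAdd l i)))) /
              (x (σ (Fin.natAdd k j)) - x (σ (Fin.castAdd l i)))
        = lval P m x / vand x ^ 2 :=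
  statement16_general q1 q2 q3 hq k l P1 m1 P2 m2 hw1 hw2
end
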